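/- Let T be a Lie-Yamaguti algebra over a field k of characteristic zero, (ρ,D,θ;V) a representation of T, and (f,g) ∈ C²(T,V)×C³(T,V). Then the pair (δ_I(f,g), δ_II(f,g)) lies in C⁴(T,V)×C⁵(T,V), and applying the (4,5)-level coboundary to it gives zero: δ_I(δ_I(f,g), δ_II(f,g)) = 0 and δ_II(δ_I(f,g), δ_II(f,g)) = 0. -/
import Mathlib


structure LieYamaguti (k T : Type*) [Field k] [CharZero k] [AddCommGroup T] [Module k T] where
  mul : T →ₗ[k] T →ₗ[k] T
  tri : T →ₗ[k] T →ₗ[k] T →ₗ[k] T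
  ly1 : ∀ a : T, mul a a = 0
  ly2 : ∀ a b : T, tri a a b = 0
  ly3 : ∀ a b c : T, tri a b c + tri b c a + tri c a b
      + mul (mul a b) c + mul (mul b c) a + mul (mul c a) b = 0
  ly4 : ∀ a b c d : T, tri (mul a b) c d + tri (mul b c) a d + tri (mul c a) b d = 0
  ly5 : ∀ a b c d : T, tri a b (mul c d) = mul (tri a b c) d + mul c (tri a b d)
  ly6 : ∀ a b c d e : T, tri a b (tri c d e)
      = tri (tri a b c) d e + tri c (tri a b d) e + tri c d (tri a b e)

/-- A representation `(ρ, D, θ; V)` of a Lie-Yamaguti algebra. -/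
structure LYRep (k T : Type*) [Field k] [CharZero k] [AddCommGroup T] [Module k T]
    (L : LieYamaguti k T) (V : Type*) [AddCommGroup V] [Module k V] where
  ρ : T →ₗ[k] V →ₗ[k] V
  D : T →ₗ[k] T →ₗ[k] V →ₗ[k] V
  θ : T →ₗ[k] T →ₗ[k] V →ₗ[k] V
  r1 : ∀ a b : T, D a b + θ a b - θ b a = ρ a ∘ₗ ρ b - ρ b ∘ₗ ρ a - ρ (L.mul a b)
  r2 : ∀ a b c : T, θ a (L.mul b c) - ρ b ∘ₗ θ a c + ρ c ∘ₗ θ a b = 0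
  r3 : ∀ a b c : T, θ (L.mul a b) c - θ a c ∘ₗ ρ b + θ b c ∘ₗ ρ a = 0
  r4 : ∀ a b c d : T, θ c d ∘ₗ θ a b - θ b d ∘ₗ θ a c - θ a (L.tri b c d) + D b c ∘ₗ θ a d = 0
  r5 : ∀ a b c : T, D a b ∘ₗ ρ c - ρ c ∘ₗ D a b = ρ (L.tri a b c)
  r6 : ∀ a b c d : T, D a b ∘ₗ θ c d - θ c d ∘ₗ D a b = θ (L.tri a b c) d + θ c (L.tri a b d)

/-- `f : T × T → V` is bilinear. -/
def IsBilin (k : Type*) {T V : Type*} [Field k] [AddCommGroup T] [Module k T]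
    [AddCommGroup V] [Module k V] (f : T → T → V) : Prop :=
  (∀ b, IsLinearMap k (fun a => f a b)) ∧ (∀ a, IsLinearMap k (fun b => f a b))

/-- `g : T × T × T → V` is trilinear. -/
def IsTrilin (k : Type*) {T V : Type*} [Field k] [AddCommGroup T] [Module k T]
    [AddCommGroup V] [Module k V] (g : T → T → T → V) : Prop :=
  (∀ b c, IsLinearMap k (fun a => g a b c)) ∧ (∀ a c, IsLinearMap k (fun b => g a b c)) ∧
  (∀ a b, IsLinearMap k (fun c => g a b c))

/-- `F : T⁴ → V` is 4-linear. -/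
def Is4Lin (k : Type*) {T V : Type*} [Field k] [AddCommGroup T] [Module k T]
    [AddCommGroup V] [Module k V] (F : T → T → T → T → V) : Prop :=
  (∀ x2 x3 x4, IsLinearMap k (fun x1 => F x1 x2 x3 x4)) ∧
  (∀ x1 x3 x4, IsLinearMap k (fun x2 => F x1 x2 x3 x4)) ∧
  (∀ x1 x2 x4, IsLinearMap k (fun x3 => F x1 x2 x3 x4)) ∧
  (∀ x1 x2 x3, IsLinearMap k (fun x4 => F x1 x2 x3 x4))

/-- `G : T⁵ → V` is 5-linear. -/
def Is5Lin (k : Type*) {T V : Type*} [Field k] [AddCommGroup T] [Module k T]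
    [AddCommGroup V] [Module k V] (G : T → T → T → T → T → V) : Prop :=
  (∀ x2 x3 x4 x5, IsLinearMap k (fun x1 => G x1 x2 x3 x4 x5)) ∧
  (∀ x1 x3 x4 x5, IsLinearMap k (fun x2 => G x1 x2 x3 x4 x5)) ∧
  (∀ x1 x2 x4 x5, IsLinearMap k (fun x3 => G x1 x2 x3 x4 x5)) ∧
  (∀ x1 x2 x3 x5, IsLinearMap k (fun x4 => G x1 x2 x3 x4 x5)) ∧
  (∀ x1 x2 x3 x4, IsLinearMap k (fun x5 => G x1 x2 x3 x4 x5))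

variable {k T : Type*} [Field k] [CharZero k] [AddCommGroup T] [Module k T]

variable {V : Type*} [AddCommGroup V] [Module k V] {L : LieYamaguti k T}

/-- `δ_I(f,g)` with respect to the representation `R`. -/
def RdI (R : LYRep k T L V) (f : T → T → V) (g : T → T → T → V) (a b c d : T) : V :=
  - R.ρ c (g a b d) + R.ρ d (g a b c) + g a b (L.mul c d)
    + R.D a b (f c d) - f (L.tri a b c) d - f c (L.tri a b d)

/-- `δ_II(f,g)` with respect to the representation `R`. -/
def RdII (R : LYRep k T L V) (_f : T → T → V) (g : T → T → T → V) (a b c d e : T) : V :=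
  - R.θ d e (g a b c) + R.θ c e (g a b d) + R.D a b (g c d e) - R.D c d (g a b e)
    + g a b (L.tri c d e) - g (L.tri a b c) d e - g c (L.tri a b d) e - g c d (L.tri a b e)

/-- `δ*_I(f,g)` with respect to the representation `R`. -/
def RdsI (R : LYRep k T L V) (f : T → T → V) (g : T → T → T → V) (a b c : T) : V :=
  - R.ρ a (f b c) - R.ρ b (f c a) - R.ρ c (f a b)
    + f (L.mul a b) c + f (L.mul b c) a + f (L.mul c a) b
    + g a b c + g b c a + g c a b

/-- `δ*_II(f,g)` with respect to the representation `R`. -/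
def RdsII (R : LYRep k T L V) (f : T → T → V) (g : T → T → T → V) (a b c d : T) : V :=
  R.θ a d (f b c) + R.θ b d (f c a) + R.θ c d (f a b)
    + g (L.mul a b) c d + g (L.mul b c) a d + g (L.mul c a) b d

/-- `δ_I(𝐹,𝐺)` at the (4,5)-level, with respect to the representation `R`. -/
def Rd45I (R : LYRep k T L V) (F : T → T → T → T → V) (G : T → T → T → T → T → V)
    (x1 x2 x3 x4 x5 x6 : T) : V :=
  R.ρ x5 (G x1 x2 x3 x4 x6) - R.ρ x6 (G x1 x2 x3 x4 x5) - G x1 x2 x3 x4 (L.mul x5 x6)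
    + R.D x1 x2 (F x3 x4 x5 x6) - R.D x3 x4 (F x1 x2 x5 x6)
    - F (L.tri x1 x2 x3) x4 x5 x6 - F x3 (L.tri x1 x2 x4) x5 x6
    - F x3 x4 (L.tri x1 x2 x5) x6 - F x3 x4 x5 (L.tri x1 x2 x6)
    + F x1 x2 (L.tri x3 x4 x5) x6 + F x1 x2 x5 (L.tri x3 x4 x6)

/-- `δ_II(𝐹,𝐺)` at the (4,5)-level, with respect to the representation `R`. -/
def Rd45II (R : LYRep k T L V) (_F : T → T → T → T → V) (G : T → T → T → T → T → V)
    (x1 x2 x3 x4 x5 x6 x7 : T) : V :=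
  R.θ x6 x7 (G x1 x2 x3 x4 x5) - R.θ x5 x7 (G x1 x2 x3 x4 x6)
    + R.D x1 x2 (G x3 x4 x5 x6 x7) - R.D x3 x4 (G x1 x2 x5 x6 x7)
    + R.D x5 x6 (G x1 x2 x3 x4 x7)
    - G (L.tri x1 x2 x3) x4 x5 x6 x7 - G x3 (L.tri x1 x2 x4) x5 x6 x7
    - G x3 x4 (L.tri x1 x2 x5) x6 x7 - G x3 x4 x5 (L.tri x1 x2 x6) x7
    - G x3 x4 x5 x6 (L.tri x1 x2 x7)
    + G x1 x2 (L.tri x3 x4 x5) x6 x7 + G x1 x2 x5 (L.tri x3 x4 x6) x7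
    + G x1 x2 x5 x6 (L.tri x3 x4 x7) - G x1 x2 x3 x4 (L.tri x5 x6 x7)

set_option maxHeartbeats 4000000 in
/-- For `(f,g) ∈ C²(T,V) × C³(T,V)`, the pair `(δ_I(f,g), δ_II(f,g))` lies in
`C⁴(T,V) × C⁵(T,V)` and applying the (4,5)-level coboundary to it gives zero. -/
theorem delta_delta_eq_zero (L : LieYamaguti k T) (R : LYRep k T L V)
    (f : T → T → V) (g : T → T → T → V)
    (hf : IsBilin k f) (hfalt : ∀ a : T, f a a = 0)
    (hg : IsTrilin k g) (hgalt : ∀ a b : T, g a a b = 0) :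
    Is4Lin k (RdI R f g) ∧
    (∀ x1 x3 x4 : T, RdI R f g x1 x1 x3 x4 = 0) ∧
    (∀ x1 x2 x3 : T, RdI R f g x1 x2 x3 x3 = 0) ∧
    Is5Lin k (RdII R f g) ∧
    (∀ x1 x3 x4 x5 : T, RdII R f g x1 x1 x3 x4 x5 = 0) ∧
    (∀ x1 x2 x3 x5 : T, RdII R f g x1 x2 x3 x3 x5 = 0) ∧
    (∀ x1 x2 x3 x4 x5 x6 : T, Rd45I R (RdI R f g) (RdII R f g) x1 x2 x3 x4 x5 x6 = 0) ∧
    (∀ x1 x2 x3 x4 x5 x6 x7 : T, Rd45II R (RdI R f g) (RdII R f g) x1 x2 x3 x4 x5 x6 x7 = 0) := by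

  obtain ⟨hf1, hf2⟩ := hf
  obtain ⟨hg1, hg2, hg3⟩ := hg
  have fadd1 : ∀ (b x y : T), f (x + y) b = f x b + f y b := fun b x y => (hf1 b).map_add x y
  have fsub1 : ∀ (b x y : T), f (x - y) b = f x b - f y b := fun b x y => (hf1 b).map_sub x y
  have fneg1 : ∀ (b x : T), f (-x) b = - f x b := fun b x => (hf1 b).map_neg x
  have fsmul1 : ∀ (b : T) (s : k) (x : T), f (s • x) b = s • f x b := fun b s x => (hf1 b).map_smul s x
  have fzero1 : ∀ (b : T), f 0 b = 0 := fun b => (hf1 b).map_zero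
  have fadd2 : ∀ (a x y : T), f a (x + y) = f a x + f a y := fun a x y => (hf2 a).map_add x y
  have fsub2 : ∀ (a x y : T), f a (x - y) = f a x - f a y := fun a x y => (hf2 a).map_sub x y
  have fneg2 : ∀ (a x : T), f a (-x) = - f a x := fun a x => (hf2 a).map_neg x
  have fsmul2 : ∀ (a : T) (s : k) (x : T), f a (s • x) = s • f a x := fun a s x => (hf2 a).map_smul s x
  have fzero2 : ∀ (a : T), f a 0 = 0 := fun a => (hf2 a).map_zero
  have gadd1 : ∀ (b c x y : T), g (x + y) b c = g x b c + g y b c := fun b c x y => (hg1 b c).map_add x y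
  have gsub1 : ∀ (b c x y : T), g (x - y) b c = g x b c - g y b c := fun b c x y => (hg1 b c).map_sub x y
  have gneg1 : ∀ (b c x : T), g (-x) b c = - g x b c := fun b c x => (hg1 b c).map_neg x
  have gsmul1 : ∀ (b c : T) (s : k) (x : T), g (s • x) b c = s • g x b c := fun b c s x => (hg1 b c).map_smul s x
  have gzero1 : ∀ (b c : T), g 0 b c = 0 := fun b c => (hg1 b c).map_zero
  have gadd2 : ∀ (a c x y : T), g a (x + y) c = g a x c + g a y c := fun a c x y => (hg2 a c).map_add x y
  have gsub2 : ∀ (a c x y : T), g a (x - y) c = g a x c - g a y c := fun a c x y => (hg2 a c).map_sub x y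
  have gneg2 : ∀ (a c x : T), g a (-x) c = - g a x c := fun a c x => (hg2 a c).map_neg x
  have gsmul2 : ∀ (a c : T) (s : k) (x : T), g a (s • x) c = s • g a x c := fun a c s x => (hg2 a c).map_smul s x
  have gzero2 : ∀ (a c : T), g a 0 c = 0 := fun a c => (hg2 a c).map_zero
  have gadd3 : ∀ (a b x y : T), g a b (x + y) = g a b x + g a b y := fun a b x y => (hg3 a b).map_add x y
  have gsub3 : ∀ (a b x y : T), g a b (x - y) = g a b x - g a b y := fun a b x y => (hg3 a b).map_sub x y
  have gneg3 : ∀ (a b x : T), g a b (-x) = - g a b x := fun a b x => (hg3 a b).map_neg x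
  have gsmul3 : ∀ (a b : T) (s : k) (x : T), g a b (s • x) = s • g a b x := fun a b s x => (hg3 a b).map_smul s x
  have gzero3 : ∀ (a b : T), g a b 0 = 0 := fun a b => (hg3 a b).map_zero
  have hfswap : ∀ u v : T, f u v = - f v u := by
    intro u v
    have h := hfalt (u + v)
    simp only [fadd1, fadd2, hfalt, zero_add, add_zero] at h
    linear_combination (norm := module) h
  have hgswap : ∀ u v w : T, g u v w = - g v u w := by
    intro u v w
    have h := hgalt (u + v) w
    simp only [gadd1, gadd2, hgalt, zero_add, add_zero] at h
    linear_combination (norm := module) h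
  have hD0 : ∀ (a : T) (w : V), R.D a a w = 0 := by
    intro a w
    have h := LinearMap.congr_fun (R.r1 a a) w
    simp only [LinearMap.add_apply, LinearMap.sub_apply, LinearMap.comp_apply, L.ly1,
      map_zero, LinearMap.zero_apply] at h
    linear_combination (norm := module) h
  have hr1 : ∀ (u v : T) (w : V), R.D u v w = R.θ v u w - R.θ u v w + R.ρ u (R.ρ v w)
      - R.ρ v (R.ρ u w) - R.ρ (L.mul u v) w := by
    intro u v w
    have h := LinearMap.congr_fun (R.r1 u v) w
    simp only [LinearMap.add_apply, LinearMap.sub_apply, LinearMap.comp_apply] at h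
    linear_combination (norm := module) h
  have hr2 : ∀ (u p q : T) (w : V), R.θ u (L.mul p q) w = R.ρ p (R.θ u q w) - R.ρ q (R.θ u p w) := by
    intro u p q w
    have h := LinearMap.congr_fun (R.r2 u p q) w
    simp only [LinearMap.add_apply, LinearMap.sub_apply, LinearMap.comp_apply,
      LinearMap.zero_apply] at h
    linear_combination (norm := module) h
  have hr4 : ∀ (u p q r : T) (w : V), R.θ u (L.tri p q r) w = R.θ q r (R.θ u p w)
      - R.θ p r (R.θ u q w) + R.D p q (R.θ u r w) := by
    intro u p q r w
    have h := LinearMap.congr_fun (R.r4 u p q r) w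
    simp only [LinearMap.add_apply, LinearMap.sub_apply, LinearMap.comp_apply,
      LinearMap.zero_apply] at h
    linear_combination (norm := module) - h
  have hr5 : ∀ (p q r : T) (w : V), R.ρ (L.tri p q r) w = R.D p q (R.ρ r w) - R.ρ r (R.D p q w) := by
    intro p q r w
    have h := LinearMap.congr_fun (R.r5 p q r) w
    simp only [LinearMap.sub_apply, LinearMap.comp_apply] at h
    linear_combination (norm := module) - h
  have hr6 : ∀ (p q r s : T) (w : V), R.θ (L.tri p q r) s w = R.D p q (R.θ r s w)
      - R.θ r s (R.D p q w) - R.θ r (L.tri p q s) w := by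
    intro p q r s w
    have h := LinearMap.congr_fun (R.r6 p q r s) w
    simp only [LinearMap.add_apply, LinearMap.sub_apply, LinearMap.comp_apply] at h
    linear_combination (norm := module) - h
  have hily5rho : ∀ (p q r d : T) (w : V), R.ρ (L.mul (L.tri p q r) d) w
      = R.ρ (L.tri p q (L.mul r d)) w - R.ρ (L.mul r (L.tri p q d)) w := by
    intro p q r d w
    have h := congrArg (fun t => R.ρ t w) (L.ly5 p q r d)
    simp only [map_add, LinearMap.add_apply] at h
    linear_combination (norm := module) - h
  have hmswapT : ∀ u v : T, L.mul u v = - L.mul v u := by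
    intro u v
    have h := L.ly1 (u + v)
    simp only [map_add, LinearMap.add_apply, L.ly1, zero_add, add_zero] at h
    linear_combination (norm := module) h
  have hily6 : ∀ a b c v t : T, L.tri (L.tri a b c) v t = L.tri a b (L.tri c v t)
      - L.tri c (L.tri a b v) t - L.tri c v (L.tri a b t) := by
    intro a b c v t
    linear_combination (norm := module) - L.ly6 a b c v t
  refine ⟨?_, ?_, ?_, ?_, ?_, ?_, ?_, ?_⟩
  · -- Is4Lin (RdI R f g)
    refine ⟨fun b c d => ⟨fun y z => ?_, fun s y => ?_⟩, fun a c d => ⟨fun y z => ?_, fun s y => ?_⟩,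
      fun a b d => ⟨fun y z => ?_, fun s y => ?_⟩, fun a b c => ⟨fun y z => ?_, fun s y => ?_⟩⟩ <;>
      simp only [RdI, map_add, map_smul, map_sub, map_neg, LinearMap.add_apply, LinearMap.smul_apply, fadd1, fsmul1, fadd2, fsmul2, gadd1, gsmul1, gadd2, gsmul2, gadd3, gsmul3] <;> module
  · -- RdI alternating in (1,2)
    intro a c d
    simp only [RdI, hgalt, L.ly2, map_zero, fzero1, fzero2, hD0, neg_zero, add_zero, zero_add,
      sub_zero, zero_sub, neg_neg, sub_self]
  · -- RdI alternating in (3,4)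
    intro a b c
    simp only [RdI, L.ly1, hfalt, gzero3, map_zero, add_zero, zero_add, sub_zero]
    linear_combination (norm := module) - hfswap c (L.tri a b c)
  · -- Is5Lin (RdII R f g)
    refine ⟨fun b c d e => ⟨fun y z => ?_, fun s y => ?_⟩, fun a c d e => ⟨fun y z => ?_, fun s y => ?_⟩,
      fun a b d e => ⟨fun y z => ?_, fun s y => ?_⟩, fun a b c e => ⟨fun y z => ?_, fun s y => ?_⟩,
      fun a b c d => ⟨fun y z => ?_, fun s y => ?_⟩⟩ <;>
      simp only [RdII, map_add, map_smul, map_sub, map_neg, LinearMap.add_apply, LinearMap.smul_apply, fadd1, fsmul1, fadd2, fsmul2, gadd1, gsmul1, gadd2, gsmul2, gadd3, gsmul3] <;> module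
  · -- RdII alternating in (1,2)
    intro a c d e
    simp only [RdII, hgalt, L.ly2, map_zero, gzero1, gzero2, gzero3, hD0, neg_zero, add_zero,
      zero_add, sub_zero, zero_sub, neg_neg, sub_self]
  · -- RdII alternating in (3,4)
    intro a b c e
    simp only [RdII, hgalt, L.ly2, map_zero, gzero3, hD0, neg_zero, add_zero, zero_add, sub_zero,
      zero_sub, sub_self]
    linear_combination (norm := module) - hgswap c (L.tri a b c) e
  · -- δ(δ(f,g)) part I
    intro x1 x2 x3 x4 x5 x6
    have ha1 : (f (L.tri (L.tri x1 x2 x3) x4 x5) x6) = (f (L.tri x1 x2 (L.tri x3 x4 x5)) x6) - (f (L.tri x3 (L.tri x1 x2 x4) x5) x6) - (f (L.tri x3 x4 (L.tri x1 x2 x5)) x6) := by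
      rw [hily6 x1 x2 x3 x4 x5]
      simp only [fadd1, fsub1, fneg1, fadd2, fsub2, fneg2, gadd1, gsub1, gneg1, gadd2, gsub2, gneg2, gadd3, gsub3, gneg3]
      try module
    have ha2 : (f x5 (L.tri (L.tri x1 x2 x3) x4 x6)) = (f x5 (L.tri x1 x2 (L.tri x3 x4 x6))) - (f x5 (L.tri x3 (L.tri x1 x2 x4) x6)) - (f x5 (L.tri x3 x4 (L.tri x1 x2 x6))) := by
      rw [hily6 x1 x2 x3 x4 x6]
      simp only [fadd1, fsub1, fneg1, fadd2, fsub2, fneg2, gadd1, gsub1, gneg1, gadd2, gsub2, gneg2, gadd3, gsub3, gneg3]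
      try module
    have ha3 : (g x1 x2 (L.mul x5 (L.tri x3 x4 x6))) = -(g x1 x2 (L.mul (L.tri x3 x4 x6) x5)) := by
      rw [hmswapT x5 (L.tri x3 x4 x6)]
      simp only [fadd1, fsub1, fneg1, fadd2, fsub2, fneg2, gadd1, gsub1, gneg1, gadd2, gsub2, gneg2, gadd3, gsub3, gneg3]
      try module
    have ha4 : (g x1 x2 (L.tri x3 x4 (L.mul x5 x6))) = (g x1 x2 (L.mul (L.tri x3 x4 x5) x6)) + (g x1 x2 (L.mul x5 (L.tri x3 x4 x6))) := by
      rw [L.ly5 x3 x4 x5 x6]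
      simp only [fadd1, fsub1, fneg1, fadd2, fsub2, fneg2, gadd1, gsub1, gneg1, gadd2, gsub2, gneg2, gadd3, gsub3, gneg3]
      try module
    have ha5 : (g x1 x2 (L.mul x5 (L.tri x3 x4 x6))) = -(g x1 x2 (L.mul (L.tri x3 x4 x6) x5)) := by
      rw [hmswapT x5 (L.tri x3 x4 x6)]
      simp only [fadd1, fsub1, fneg1, fadd2, fsub2, fneg2, gadd1, gsub1, gneg1, gadd2, gsub2, gneg2, gadd3, gsub3, gneg3]
      try module
    have ha6 : (g x3 x4 (L.mul x5 (L.tri x1 x2 x6))) = -(g x3 x4 (L.mul (L.tri x1 x2 x6) x5)) := by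
      rw [hmswapT x5 (L.tri x1 x2 x6)]
      simp only [fadd1, fsub1, fneg1, fadd2, fsub2, fneg2, gadd1, gsub1, gneg1, gadd2, gsub2, gneg2, gadd3, gsub3, gneg3]
      try module
    have ha7 : (g x3 x4 (L.tri x1 x2 (L.mul x5 x6))) = (g x3 x4 (L.mul (L.tri x1 x2 x5) x6)) + (g x3 x4 (L.mul x5 (L.tri x1 x2 x6))) := by
      rw [L.ly5 x1 x2 x5 x6]
      simp only [fadd1, fsub1, fneg1, fadd2, fsub2, fneg2, gadd1, gsub1, gneg1, gadd2, gsub2, gneg2, gadd3, gsub3, gneg3]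
      try module
    have ha8 : (g x3 x4 (L.mul x5 (L.tri x1 x2 x6))) = -(g x3 x4 (L.mul (L.tri x1 x2 x6) x5)) := by
      rw [hmswapT x5 (L.tri x1 x2 x6)]
      simp only [fadd1, fsub1, fneg1, fadd2, fsub2, fneg2, gadd1, gsub1, gneg1, gadd2, gsub2, gneg2, gadd3, gsub3, gneg3]
      try module
    have ha9 : (R.ρ (L.mul x1 x2) (R.D x3 x4 (f x5 x6))) = -(R.ρ (L.mul x1 x2) (R.ρ (L.mul x3 x4) (f x5 x6))) + (R.ρ (L.mul x1 x2) (R.ρ x3 (R.ρ x4 (f x5 x6)))) - (R.ρ (L.mul x1 x2) (R.ρ x4 (R.ρ x3 (f x5 x6)))) - (R.ρ (L.mul x1 x2) (R.θ x3 x4 (f x5 x6))) + (R.ρ (L.mul x1 x2) (R.θ x4 x3 (f x5 x6))) := by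
      have hx := congrArg (R.ρ (L.mul x1 x2)) (hr1 x3 x4 (f x5 x6))
      simp only [map_add, map_sub, map_neg] at hx
      linear_combination (norm := abel1) hx
    have ha10 : (R.ρ (L.mul x3 x4) (R.D x1 x2 (f x5 x6))) = -(R.ρ (L.mul x3 x4) (R.ρ (L.mul x1 x2) (f x5 x6))) + (R.ρ (L.mul x3 x4) (R.ρ x1 (R.ρ x2 (f x5 x6)))) - (R.ρ (L.mul x3 x4) (R.ρ x2 (R.ρ x1 (f x5 x6)))) - (R.ρ (L.mul x3 x4) (R.θ x1 x2 (f x5 x6))) + (R.ρ (L.mul x3 x4) (R.θ x2 x1 (f x5 x6))) := by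
      have hx := congrArg (R.ρ (L.mul x3 x4)) (hr1 x1 x2 (f x5 x6))
      simp only [map_add, map_sub, map_neg] at hx
      linear_combination (norm := abel1) hx
    have ha11 : (R.ρ (L.mul x3 x4) (R.D x1 x2 (f x5 x6))) = -(R.ρ (L.mul x3 x4) (R.ρ (L.mul x1 x2) (f x5 x6))) + (R.ρ (L.mul x3 x4) (R.ρ x1 (R.ρ x2 (f x5 x6)))) - (R.ρ (L.mul x3 x4) (R.ρ x2 (R.ρ x1 (f x5 x6)))) - (R.ρ (L.mul x3 x4) (R.θ x1 x2 (f x5 x6))) + (R.ρ (L.mul x3 x4) (R.θ x2 x1 (f x5 x6))) := by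
      have hx := congrArg (R.ρ (L.mul x3 x4)) (hr1 x1 x2 (f x5 x6))
      simp only [map_add, map_sub, map_neg] at hx
      linear_combination (norm := abel1) hx
    have ha12 : (R.ρ x2 (R.D x3 x4 (f x5 x6))) = -(R.ρ x2 (R.ρ (L.mul x3 x4) (f x5 x6))) + (R.ρ x2 (R.ρ x3 (R.ρ x4 (f x5 x6)))) - (R.ρ x2 (R.ρ x4 (R.ρ x3 (f x5 x6)))) - (R.ρ x2 (R.θ x3 x4 (f x5 x6))) + (R.ρ x2 (R.θ x4 x3 (f x5 x6))) := by
      have hx := congrArg (R.ρ x2) (hr1 x3 x4 (f x5 x6))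
      simp only [map_add, map_sub, map_neg] at hx
      linear_combination (norm := abel1) hx
    have ha13 : (R.ρ x1 (R.ρ x2 (R.D x3 x4 (f x5 x6)))) = -(R.ρ x1 (R.ρ x2 (R.ρ (L.mul x3 x4) (f x5 x6)))) + (R.ρ x1 (R.ρ x2 (R.ρ x3 (R.ρ x4 (f x5 x6))))) - (R.ρ x1 (R.ρ x2 (R.ρ x4 (R.ρ x3 (f x5 x6))))) - (R.ρ x1 (R.ρ x2 (R.θ x3 x4 (f x5 x6)))) + (R.ρ x1 (R.ρ x2 (R.θ x4 x3 (f x5 x6)))) := by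
      have hx := congrArg (R.ρ x1) (ha12)
      simp only [map_add, map_sub, map_neg] at hx
      linear_combination (norm := abel1) hx
    have ha14 : (R.ρ x1 (R.D x3 x4 (f x5 x6))) = -(R.ρ x1 (R.ρ (L.mul x3 x4) (f x5 x6))) + (R.ρ x1 (R.ρ x3 (R.ρ x4 (f x5 x6)))) - (R.ρ x1 (R.ρ x4 (R.ρ x3 (f x5 x6)))) - (R.ρ x1 (R.θ x3 x4 (f x5 x6))) + (R.ρ x1 (R.θ x4 x3 (f x5 x6))) := by
      have hx := congrArg (R.ρ x1) (hr1 x3 x4 (f x5 x6))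
      simp only [map_add, map_sub, map_neg] at hx
      linear_combination (norm := abel1) hx
    have ha15 : (R.ρ x2 (R.ρ x1 (R.D x3 x4 (f x5 x6)))) = -(R.ρ x2 (R.ρ x1 (R.ρ (L.mul x3 x4) (f x5 x6)))) + (R.ρ x2 (R.ρ x1 (R.ρ x3 (R.ρ x4 (f x5 x6))))) - (R.ρ x2 (R.ρ x1 (R.ρ x4 (R.ρ x3 (f x5 x6))))) - (R.ρ x2 (R.ρ x1 (R.θ x3 x4 (f x5 x6)))) + (R.ρ x2 (R.ρ x1 (R.θ x4 x3 (f x5 x6)))) := by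
      have hx := congrArg (R.ρ x2) (ha14)
      simp only [map_add, map_sub, map_neg] at hx
      linear_combination (norm := abel1) hx
    have ha16 : (R.ρ x3 (R.D x1 x2 (R.ρ x4 (f x5 x6)))) = -(R.ρ x3 (R.ρ (L.mul x1 x2) (R.ρ x4 (f x5 x6)))) + (R.ρ x3 (R.ρ x1 (R.ρ x2 (R.ρ x4 (f x5 x6))))) - (R.ρ x3 (R.ρ x2 (R.ρ x1 (R.ρ x4 (f x5 x6))))) - (R.ρ x3 (R.θ x1 x2 (R.ρ x4 (f x5 x6)))) + (R.ρ x3 (R.θ x2 x1 (R.ρ x4 (f x5 x6)))) := by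
      have hx := congrArg (R.ρ x3) (hr1 x1 x2 (R.ρ x4 (f x5 x6)))
      simp only [map_add, map_sub, map_neg] at hx
      linear_combination (norm := abel1) hx
    have ha17 : (R.ρ x3 (R.ρ (L.tri x1 x2 x4) (f x5 x6))) = (R.ρ x3 (R.D x1 x2 (R.ρ x4 (f x5 x6)))) - (R.ρ x3 (R.ρ x4 (R.D x1 x2 (f x5 x6)))) := by
      have hx := congrArg (R.ρ x3) (hr5 x1 x2 x4 (f x5 x6))
      simp only [map_add, map_sub, map_neg] at hx
      linear_combination (norm := abel1) hx
    have ha18 : (R.ρ x3 (R.D x1 x2 (R.ρ x4 (f x5 x6)))) = -(R.ρ x3 (R.ρ (L.mul x1 x2) (R.ρ x4 (f x5 x6)))) + (R.ρ x3 (R.ρ x1 (R.ρ x2 (R.ρ x4 (f x5 x6))))) - (R.ρ x3 (R.ρ x2 (R.ρ x1 (R.ρ x4 (f x5 x6))))) - (R.ρ x3 (R.θ x1 x2 (R.ρ x4 (f x5 x6)))) + (R.ρ x3 (R.θ x2 x1 (R.ρ x4 (f x5 x6)))) := by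
      have hx := congrArg (R.ρ x3) (hr1 x1 x2 (R.ρ x4 (f x5 x6)))
      simp only [map_add, map_sub, map_neg] at hx
      linear_combination (norm := abel1) hx
    have ha19 : (R.ρ x4 (R.D x1 x2 (R.ρ x3 (f x5 x6)))) = -(R.ρ x4 (R.ρ (L.mul x1 x2) (R.ρ x3 (f x5 x6)))) + (R.ρ x4 (R.ρ x1 (R.ρ x2 (R.ρ x3 (f x5 x6))))) - (R.ρ x4 (R.ρ x2 (R.ρ x1 (R.ρ x3 (f x5 x6))))) - (R.ρ x4 (R.θ x1 x2 (R.ρ x3 (f x5 x6)))) + (R.ρ x4 (R.θ x2 x1 (R.ρ x3 (f x5 x6)))) := by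
      have hx := congrArg (R.ρ x4) (hr1 x1 x2 (R.ρ x3 (f x5 x6)))
      simp only [map_add, map_sub, map_neg] at hx
      linear_combination (norm := abel1) hx
    have ha20 : (R.ρ x4 (R.ρ (L.tri x1 x2 x3) (f x5 x6))) = (R.ρ x4 (R.D x1 x2 (R.ρ x3 (f x5 x6)))) - (R.ρ x4 (R.ρ x3 (R.D x1 x2 (f x5 x6)))) := by
      have hx := congrArg (R.ρ x4) (hr5 x1 x2 x3 (f x5 x6))
      simp only [map_add, map_sub, map_neg] at hx
      linear_combination (norm := abel1) hx
    have ha21 : (R.ρ x4 (R.D x1 x2 (R.ρ x3 (f x5 x6)))) = -(R.ρ x4 (R.ρ (L.mul x1 x2) (R.ρ x3 (f x5 x6)))) + (R.ρ x4 (R.ρ x1 (R.ρ x2 (R.ρ x3 (f x5 x6))))) - (R.ρ x4 (R.ρ x2 (R.ρ x1 (R.ρ x3 (f x5 x6))))) - (R.ρ x4 (R.θ x1 x2 (R.ρ x3 (f x5 x6)))) + (R.ρ x4 (R.θ x2 x1 (R.ρ x3 (f x5 x6)))) := by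
      have hx := congrArg (R.ρ x4) (hr1 x1 x2 (R.ρ x3 (f x5 x6)))
      simp only [map_add, map_sub, map_neg] at hx
      linear_combination (norm := abel1) hx
    have ha22 : (R.θ x1 x2 (R.D x3 x4 (f x5 x6))) = -(R.θ x1 x2 (R.ρ (L.mul x3 x4) (f x5 x6))) + (R.θ x1 x2 (R.ρ x3 (R.ρ x4 (f x5 x6)))) - (R.θ x1 x2 (R.ρ x4 (R.ρ x3 (f x5 x6)))) - (R.θ x1 x2 (R.θ x3 x4 (f x5 x6))) + (R.θ x1 x2 (R.θ x4 x3 (f x5 x6))) := by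
      have hx := congrArg (R.θ x1 x2) (hr1 x3 x4 (f x5 x6))
      simp only [map_add, map_sub, map_neg] at hx
      linear_combination (norm := abel1) hx
    have ha23 : (R.θ x2 x1 (R.D x3 x4 (f x5 x6))) = -(R.θ x2 x1 (R.ρ (L.mul x3 x4) (f x5 x6))) + (R.θ x2 x1 (R.ρ x3 (R.ρ x4 (f x5 x6)))) - (R.θ x2 x1 (R.ρ x4 (R.ρ x3 (f x5 x6)))) - (R.θ x2 x1 (R.θ x3 x4 (f x5 x6))) + (R.θ x2 x1 (R.θ x4 x3 (f x5 x6))) := by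
      have hx := congrArg (R.θ x2 x1) (hr1 x3 x4 (f x5 x6))
      simp only [map_add, map_sub, map_neg] at hx
      linear_combination (norm := abel1) hx
    simp only [Rd45I, RdI, RdII]
    simp only [map_add, map_sub, map_neg]
    linear_combination (norm := abel1) -hr1 (L.tri x1 x2 x3) x4 (f x5 x6) + hr1 x1 x2 (R.D x3 x4 (f x5 x6)) - hr1 x1 x2 (R.ρ x5 (g x3 x4 x6)) + hr1 x1 x2 (R.ρ x6 (g x3 x4 x5)) - hr1 x3 (L.tri x1 x2 x4) (f x5 x6) - hr1 x3 x4 (R.D x1 x2 (f x5 x6)) + hr1 x3 x4 (R.ρ x5 (g x1 x2 x6)) - hr1 x3 x4 (R.ρ x6 (g x1 x2 x5)) + ha1 + ha2 + ha3 - ha4 - ha5 - ha6 + ha7 + ha8 + hily5rho x1 x2 x3 x4 (f x5 x6) - ha9 + ha10 + hr5 x1 x2 (L.mul x3 x4) (f x5 x6) + hr1 x1 x2 (R.ρ (L.mul x3 x4) (f x5 x6)) - ha11 - hr5 x1 x2 x3 (R.ρ x4 (f x5 x6)) - hr1 x1 x2 (R.ρ x3 (R.ρ x4 (f x5 x6)))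 + hr5 x1 x2 x4 (R.ρ x3 (f x5 x6)) + hr1 x1 x2 (R.ρ x4 (R.ρ x3 (f x5 x6))) + hr5 x1 x2 x5 (g x3 x4 x6) + hr1 x1 x2 (R.ρ x5 (g x3 x4 x6)) - hr5 x1 x2 x6 (g x3 x4 x5) - hr1 x1 x2 (R.ρ x6 (g x3 x4 x5)) - hr5 x3 x4 x5 (g x1 x2 x6) - hr1 x3 x4 (R.ρ x5 (g x1 x2 x6)) + hr5 x3 x4 x6 (g x1 x2 x5) + hr1 x3 x4 (R.ρ x6 (g x1 x2 x5)) + ha13 - ha15 + ha16 - ha17 - ha18 - ha19 + ha20 + ha21 + hr6 x1 x2 x3 x4 (f x5 x6) + hr1 x1 x2 (R.θ x3 x4 (f x5 x6)) - hr6 x1 x2 x4 x3 (f x5 x6) - hr1 x1 x2 (R.θ x4 x3 (f x5 x6)) - ha22 + ha23 - hr2 x3 x5 x6 (g x1 x2 x4) + hr2 x4 x5 x6 (g x1 x2 x3)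
  · -- δ(δ(f,g)) part II
    intro x1 x2 x3 x4 x5 x6 x7
    have hb1 : (g (L.tri (L.tri x1 x2 x3) x4 x5) x6 x7) = (g (L.tri x1 x2 (L.tri x3 x4 x5)) x6 x7) - (g (L.tri x3 (L.tri x1 x2 x4) x5) x6 x7) - (g (L.tri x3 x4 (L.tri x1 x2 x5)) x6 x7) := by
      rw [hily6 x1 x2 x3 x4 x5]
      simp only [fadd1, fsub1, fneg1, fadd2, fsub2, fneg2, gadd1, gsub1, gneg1, gadd2, gsub2, gneg2, gadd3, gsub3, gneg3]
      try module
    have hb2 : (g x1 x2 (L.tri (L.tri x3 x4 x5) x6 x7)) = (g x1 x2 (L.tri x3 x4 (L.tri x5 x6 x7))) - (g x1 x2 (L.tri x5 (L.tri x3 x4 x6) x7)) - (g x1 x2 (L.tri x5 x6 (L.tri x3 x4 x7))) := by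
      rw [hily6 x3 x4 x5 x6 x7]
      simp only [fadd1, fsub1, fneg1, fadd2, fsub2, fneg2, gadd1, gsub1, gneg1, gadd2, gsub2, gneg2, gadd3, gsub3, gneg3]
      try module
    have hb3 : (g x3 x4 (L.tri (L.tri x1 x2 x5) x6 x7)) = (g x3 x4 (L.tri x1 x2 (L.tri x5 x6 x7))) - (g x3 x4 (L.tri x5 (L.tri x1 x2 x6) x7)) - (g x3 x4 (L.tri x5 x6 (L.tri x1 x2 x7))) := by
      rw [hily6 x1 x2 x5 x6 x7]
      simp only [fadd1, fsub1, fneg1, fadd2, fsub2, fneg2, gadd1, gsub1, gneg1, gadd2, gsub2, gneg2, gadd3, gsub3, gneg3]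
      try module
    have hb4 : (g x5 (L.tri (L.tri x1 x2 x3) x4 x6) x7) = (g x5 (L.tri x1 x2 (L.tri x3 x4 x6)) x7) - (g x5 (L.tri x3 (L.tri x1 x2 x4) x6) x7) - (g x5 (L.tri x3 x4 (L.tri x1 x2 x6)) x7) := by
      rw [hily6 x1 x2 x3 x4 x6]
      simp only [fadd1, fsub1, fneg1, fadd2, fsub2, fneg2, gadd1, gsub1, gneg1, gadd2, gsub2, gneg2, gadd3, gsub3, gneg3]
      try module
    have hb5 : (g x5 x6 (L.tri (L.tri x1 x2 x3) x4 x7)) = (g x5 x6 (L.tri x1 x2 (L.tri x3 x4 x7))) - (g x5 x6 (L.tri x3 (L.tri x1 x2 x4) x7)) - (g x5 x6 (L.tri x3 x4 (L.tri x1 x2 x7))) := by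
      rw [hily6 x1 x2 x3 x4 x7]
      simp only [fadd1, fsub1, fneg1, fadd2, fsub2, fneg2, gadd1, gsub1, gneg1, gadd2, gsub2, gneg2, gadd3, gsub3, gneg3]
      try module
    have hb6 : (R.ρ (L.mul x1 x2) (R.D x3 x4 (g x5 x6 x7))) = -(R.ρ (L.mul x1 x2) (R.ρ (L.mul x3 x4) (g x5 x6 x7))) + (R.ρ (L.mul x1 x2) (R.ρ x3 (R.ρ x4 (g x5 x6 x7)))) - (R.ρ (L.mul x1 x2) (R.ρ x4 (R.ρ x3 (g x5 x6 x7)))) - (R.ρ (L.mul x1 x2) (R.θ x3 x4 (g x5 x6 x7))) + (R.ρ (L.mul x1 x2) (R.θ x4 x3 (g x5 x6 x7))) := by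
      have hx := congrArg (R.ρ (L.mul x1 x2)) (hr1 x3 x4 (g x5 x6 x7))
      simp only [map_add, map_sub, map_neg] at hx
      linear_combination (norm := abel1) hx
    have hb7 : (R.ρ (L.mul x1 x2) (R.D x5 x6 (g x3 x4 x7))) = -(R.ρ (L.mul x1 x2) (R.ρ (L.mul x5 x6) (g x3 x4 x7))) + (R.ρ (L.mul x1 x2) (R.ρ x5 (R.ρ x6 (g x3 x4 x7)))) - (R.ρ (L.mul x1 x2) (R.ρ x6 (R.ρ x5 (g x3 x4 x7)))) - (R.ρ (L.mul x1 x2) (R.θ x5 x6 (g x3 x4 x7))) + (R.ρ (L.mul x1 x2) (R.θ x6 x5 (g x3 x4 x7))) := by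
      have hx := congrArg (R.ρ (L.mul x1 x2)) (hr1 x5 x6 (g x3 x4 x7))
      simp only [map_add, map_sub, map_neg] at hx
      linear_combination (norm := abel1) hx
    have hb8 : (R.ρ (L.mul x3 x4) (R.D x1 x2 (g x5 x6 x7))) = -(R.ρ (L.mul x3 x4) (R.ρ (L.mul x1 x2) (g x5 x6 x7))) + (R.ρ (L.mul x3 x4) (R.ρ x1 (R.ρ x2 (g x5 x6 x7)))) - (R.ρ (L.mul x3 x4) (R.ρ x2 (R.ρ x1 (g x5 x6 x7)))) - (R.ρ (L.mul x3 x4) (R.θ x1 x2 (g x5 x6 x7))) + (R.ρ (L.mul x3 x4) (R.θ x2 x1 (g x5 x6 x7))) := by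
      have hx := congrArg (R.ρ (L.mul x3 x4)) (hr1 x1 x2 (g x5 x6 x7))
      simp only [map_add, map_sub, map_neg] at hx
      linear_combination (norm := abel1) hx
    have hb9 : (R.ρ (L.mul x3 x4) (R.D x5 x6 (g x1 x2 x7))) = -(R.ρ (L.mul x3 x4) (R.ρ (L.mul x5 x6) (g x1 x2 x7))) + (R.ρ (L.mul x3 x4) (R.ρ x5 (R.ρ x6 (g x1 x2 x7)))) - (R.ρ (L.mul x3 x4) (R.ρ x6 (R.ρ x5 (g x1 x2 x7)))) - (R.ρ (L.mul x3 x4) (R.θ x5 x6 (g x1 x2 x7))) + (R.ρ (L.mul x3 x4) (R.θ x6 x5 (g x1 x2 x7))) := by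
      have hx := congrArg (R.ρ (L.mul x3 x4)) (hr1 x5 x6 (g x1 x2 x7))
      simp only [map_add, map_sub, map_neg] at hx
      linear_combination (norm := abel1) hx
    have hb10 : (R.ρ (L.mul x5 x6) (R.D x1 x2 (g x3 x4 x7))) = -(R.ρ (L.mul x5 x6) (R.ρ (L.mul x1 x2) (g x3 x4 x7))) + (R.ρ (L.mul x5 x6) (R.ρ x1 (R.ρ x2 (g x3 x4 x7)))) - (R.ρ (L.mul x5 x6) (R.ρ x2 (R.ρ x1 (g x3 x4 x7)))) - (R.ρ (L.mul x5 x6) (R.θ x1 x2 (g x3 x4 x7))) + (R.ρ (L.mul x5 x6) (R.θ x2 x1 (g x3 x4 x7))) := by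
      have hx := congrArg (R.ρ (L.mul x5 x6)) (hr1 x1 x2 (g x3 x4 x7))
      simp only [map_add, map_sub, map_neg] at hx
      linear_combination (norm := abel1) hx
    have hb11 : (R.ρ (L.mul x5 x6) (R.D x3 x4 (g x1 x2 x7))) = -(R.ρ (L.mul x5 x6) (R.ρ (L.mul x3 x4) (g x1 x2 x7))) + (R.ρ (L.mul x5 x6) (R.ρ x3 (R.ρ x4 (g x1 x2 x7)))) - (R.ρ (L.mul x5 x6) (R.ρ x4 (R.ρ x3 (g x1 x2 x7)))) - (R.ρ (L.mul x5 x6) (R.θ x3 x4 (g x1 x2 x7))) + (R.ρ (L.mul x5 x6) (R.θ x4 x3 (g x1 x2 x7))) := by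
      have hx := congrArg (R.ρ (L.mul x5 x6)) (hr1 x3 x4 (g x1 x2 x7))
      simp only [map_add, map_sub, map_neg] at hx
      linear_combination (norm := abel1) hx
    have hb12 : (R.ρ (L.mul x3 x4) (R.D x1 x2 (g x5 x6 x7))) = -(R.ρ (L.mul x3 x4) (R.ρ (L.mul x1 x2) (g x5 x6 x7))) + (R.ρ (L.mul x3 x4) (R.ρ x1 (R.ρ x2 (g x5 x6 x7)))) - (R.ρ (L.mul x3 x4) (R.ρ x2 (R.ρ x1 (g x5 x6 x7)))) - (R.ρ (L.mul x3 x4) (R.θ x1 x2 (g x5 x6 x7))) + (R.ρ (L.mul x3 x4) (R.θ x2 x1 (g x5 x6 x7))) := by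
      have hx := congrArg (R.ρ (L.mul x3 x4)) (hr1 x1 x2 (g x5 x6 x7))
      simp only [map_add, map_sub, map_neg] at hx
      linear_combination (norm := abel1) hx
    have hb13 : (R.ρ (L.mul x5 x6) (R.D x1 x2 (g x3 x4 x7))) = -(R.ρ (L.mul x5 x6) (R.ρ (L.mul x1 x2) (g x3 x4 x7))) + (R.ρ (L.mul x5 x6) (R.ρ x1 (R.ρ x2 (g x3 x4 x7)))) - (R.ρ (L.mul x5 x6) (R.ρ x2 (R.ρ x1 (g x3 x4 x7)))) - (R.ρ (L.mul x5 x6) (R.θ x1 x2 (g x3 x4 x7))) + (R.ρ (L.mul x5 x6) (R.θ x2 x1 (g x3 x4 x7))) := by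
      have hx := congrArg (R.ρ (L.mul x5 x6)) (hr1 x1 x2 (g x3 x4 x7))
      simp only [map_add, map_sub, map_neg] at hx
      linear_combination (norm := abel1) hx
    have hb14 : (R.ρ (L.mul x5 x6) (R.D x3 x4 (g x1 x2 x7))) = -(R.ρ (L.mul x5 x6) (R.ρ (L.mul x3 x4) (g x1 x2 x7))) + (R.ρ (L.mul x5 x6) (R.ρ x3 (R.ρ x4 (g x1 x2 x7)))) - (R.ρ (L.mul x5 x6) (R.ρ x4 (R.ρ x3 (g x1 x2 x7)))) - (R.ρ (L.mul x5 x6) (R.θ x3 x4 (g x1 x2 x7))) + (R.ρ (L.mul x5 x6) (R.θ x4 x3 (g x1 x2 x7))) := by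
      have hx := congrArg (R.ρ (L.mul x5 x6)) (hr1 x3 x4 (g x1 x2 x7))
      simp only [map_add, map_sub, map_neg] at hx
      linear_combination (norm := abel1) hx
    have hb15 : (R.ρ x2 (R.D x3 x4 (g x5 x6 x7))) = -(R.ρ x2 (R.ρ (L.mul x3 x4) (g x5 x6 x7))) + (R.ρ x2 (R.ρ x3 (R.ρ x4 (g x5 x6 x7)))) - (R.ρ x2 (R.ρ x4 (R.ρ x3 (g x5 x6 x7)))) - (R.ρ x2 (R.θ x3 x4 (g x5 x6 x7))) + (R.ρ x2 (R.θ x4 x3 (g x5 x6 x7))) := by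
      have hx := congrArg (R.ρ x2) (hr1 x3 x4 (g x5 x6 x7))
      simp only [map_add, map_sub, map_neg] at hx
      linear_combination (norm := abel1) hx
    have hb16 : (R.ρ x1 (R.ρ x2 (R.D x3 x4 (g x5 x6 x7)))) = -(R.ρ x1 (R.ρ x2 (R.ρ (L.mul x3 x4) (g x5 x6 x7)))) + (R.ρ x1 (R.ρ x2 (R.ρ x3 (R.ρ x4 (g x5 x6 x7))))) - (R.ρ x1 (R.ρ x2 (R.ρ x4 (R.ρ x3 (g x5 x6 x7))))) - (R.ρ x1 (R.ρ x2 (R.θ x3 x4 (g x5 x6 x7)))) + (R.ρ x1 (R.ρ x2 (R.θ x4 x3 (g x5 x6 x7)))) := by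
      have hx := congrArg (R.ρ x1) (hb15)
      simp only [map_add, map_sub, map_neg] at hx
      linear_combination (norm := abel1) hx
    have hb17 : (R.ρ x2 (R.D x5 x6 (g x3 x4 x7))) = -(R.ρ x2 (R.ρ (L.mul x5 x6) (g x3 x4 x7))) + (R.ρ x2 (R.ρ x5 (R.ρ x6 (g x3 x4 x7)))) - (R.ρ x2 (R.ρ x6 (R.ρ x5 (g x3 x4 x7)))) - (R.ρ x2 (R.θ x5 x6 (g x3 x4 x7))) + (R.ρ x2 (R.θ x6 x5 (g x3 x4 x7))) := by
      have hx := congrArg (R.ρ x2) (hr1 x5 x6 (g x3 x4 x7))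
      simp only [map_add, map_sub, map_neg] at hx
      linear_combination (norm := abel1) hx
    have hb18 : (R.ρ x1 (R.ρ x2 (R.D x5 x6 (g x3 x4 x7)))) = -(R.ρ x1 (R.ρ x2 (R.ρ (L.mul x5 x6) (g x3 x4 x7)))) + (R.ρ x1 (R.ρ x2 (R.ρ x5 (R.ρ x6 (g x3 x4 x7))))) - (R.ρ x1 (R.ρ x2 (R.ρ x6 (R.ρ x5 (g x3 x4 x7))))) - (R.ρ x1 (R.ρ x2 (R.θ x5 x6 (g x3 x4 x7)))) + (R.ρ x1 (R.ρ x2 (R.θ x6 x5 (g x3 x4 x7)))) := by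
      have hx := congrArg (R.ρ x1) (hb17)
      simp only [map_add, map_sub, map_neg] at hx
      linear_combination (norm := abel1) hx
    have hb19 : (R.ρ x1 (R.D x3 x4 (g x5 x6 x7))) = -(R.ρ x1 (R.ρ (L.mul x3 x4) (g x5 x6 x7))) + (R.ρ x1 (R.ρ x3 (R.ρ x4 (g x5 x6 x7)))) - (R.ρ x1 (R.ρ x4 (R.ρ x3 (g x5 x6 x7)))) - (R.ρ x1 (R.θ x3 x4 (g x5 x6 x7))) + (R.ρ x1 (R.θ x4 x3 (g x5 x6 x7))) := by
      have hx := congrArg (R.ρ x1) (hr1 x3 x4 (g x5 x6 x7))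
      simp only [map_add, map_sub, map_neg] at hx
      linear_combination (norm := abel1) hx
    have hb20 : (R.ρ x2 (R.ρ x1 (R.D x3 x4 (g x5 x6 x7)))) = -(R.ρ x2 (R.ρ x1 (R.ρ (L.mul x3 x4) (g x5 x6 x7)))) + (R.ρ x2 (R.ρ x1 (R.ρ x3 (R.ρ x4 (g x5 x6 x7))))) - (R.ρ x2 (R.ρ x1 (R.ρ x4 (R.ρ x3 (g x5 x6 x7))))) - (R.ρ x2 (R.ρ x1 (R.θ x3 x4 (g x5 x6 x7)))) + (R.ρ x2 (R.ρ x1 (R.θ x4 x3 (g x5 x6 x7)))) := by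
      have hx := congrArg (R.ρ x2) (hb19)
      simp only [map_add, map_sub, map_neg] at hx
      linear_combination (norm := abel1) hx
    have hb21 : (R.ρ x1 (R.D x5 x6 (g x3 x4 x7))) = -(R.ρ x1 (R.ρ (L.mul x5 x6) (g x3 x4 x7))) + (R.ρ x1 (R.ρ x5 (R.ρ x6 (g x3 x4 x7)))) - (R.ρ x1 (R.ρ x6 (R.ρ x5 (g x3 x4 x7)))) - (R.ρ x1 (R.θ x5 x6 (g x3 x4 x7))) + (R.ρ x1 (R.θ x6 x5 (g x3 x4 x7))) := by
      have hx := congrArg (R.ρ x1) (hr1 x5 x6 (g x3 x4 x7))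
      simp only [map_add, map_sub, map_neg] at hx
      linear_combination (norm := abel1) hx
    have hb22 : (R.ρ x2 (R.ρ x1 (R.D x5 x6 (g x3 x4 x7)))) = -(R.ρ x2 (R.ρ x1 (R.ρ (L.mul x5 x6) (g x3 x4 x7)))) + (R.ρ x2 (R.ρ x1 (R.ρ x5 (R.ρ x6 (g x3 x4 x7))))) - (R.ρ x2 (R.ρ x1 (R.ρ x6 (R.ρ x5 (g x3 x4 x7))))) - (R.ρ x2 (R.ρ x1 (R.θ x5 x6 (g x3 x4 x7)))) + (R.ρ x2 (R.ρ x1 (R.θ x6 x5 (g x3 x4 x7)))) := by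
      have hx := congrArg (R.ρ x2) (hb21)
      simp only [map_add, map_sub, map_neg] at hx
      linear_combination (norm := abel1) hx
    have hb23 : (R.ρ x3 (R.D x1 x2 (R.ρ x4 (g x5 x6 x7)))) = -(R.ρ x3 (R.ρ (L.mul x1 x2) (R.ρ x4 (g x5 x6 x7)))) + (R.ρ x3 (R.ρ x1 (R.ρ x2 (R.ρ x4 (g x5 x6 x7))))) - (R.ρ x3 (R.ρ x2 (R.ρ x1 (R.ρ x4 (g x5 x6 x7))))) - (R.ρ x3 (R.θ x1 x2 (R.ρ x4 (g x5 x6 x7)))) + (R.ρ x3 (R.θ x2 x1 (R.ρ x4 (g x5 x6 x7)))) := by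
      have hx := congrArg (R.ρ x3) (hr1 x1 x2 (R.ρ x4 (g x5 x6 x7)))
      simp only [map_add, map_sub, map_neg] at hx
      linear_combination (norm := abel1) hx
    have hb24 : (R.ρ x3 (R.ρ (L.tri x1 x2 x4) (g x5 x6 x7))) = (R.ρ x3 (R.D x1 x2 (R.ρ x4 (g x5 x6 x7)))) - (R.ρ x3 (R.ρ x4 (R.D x1 x2 (g x5 x6 x7)))) := by
      have hx := congrArg (R.ρ x3) (hr5 x1 x2 x4 (g x5 x6 x7))
      simp only [map_add, map_sub, map_neg] at hx
      linear_combination (norm := abel1) hx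
    have hb25 : (R.ρ x3 (R.D x1 x2 (R.ρ x4 (g x5 x6 x7)))) = -(R.ρ x3 (R.ρ (L.mul x1 x2) (R.ρ x4 (g x5 x6 x7)))) + (R.ρ x3 (R.ρ x1 (R.ρ x2 (R.ρ x4 (g x5 x6 x7))))) - (R.ρ x3 (R.ρ x2 (R.ρ x1 (R.ρ x4 (g x5 x6 x7))))) - (R.ρ x3 (R.θ x1 x2 (R.ρ x4 (g x5 x6 x7)))) + (R.ρ x3 (R.θ x2 x1 (R.ρ x4 (g x5 x6 x7)))) := by
      have hx := congrArg (R.ρ x3) (hr1 x1 x2 (R.ρ x4 (g x5 x6 x7)))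
      simp only [map_add, map_sub, map_neg] at hx
      linear_combination (norm := abel1) hx
    have hb26 : (R.ρ x4 (R.D x5 x6 (g x1 x2 x7))) = -(R.ρ x4 (R.ρ (L.mul x5 x6) (g x1 x2 x7))) + (R.ρ x4 (R.ρ x5 (R.ρ x6 (g x1 x2 x7)))) - (R.ρ x4 (R.ρ x6 (R.ρ x5 (g x1 x2 x7)))) - (R.ρ x4 (R.θ x5 x6 (g x1 x2 x7))) + (R.ρ x4 (R.θ x6 x5 (g x1 x2 x7))) := by
      have hx := congrArg (R.ρ x4) (hr1 x5 x6 (g x1 x2 x7))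
      simp only [map_add, map_sub, map_neg] at hx
      linear_combination (norm := abel1) hx
    have hb27 : (R.ρ x3 (R.ρ x4 (R.D x5 x6 (g x1 x2 x7)))) = -(R.ρ x3 (R.ρ x4 (R.ρ (L.mul x5 x6) (g x1 x2 x7)))) + (R.ρ x3 (R.ρ x4 (R.ρ x5 (R.ρ x6 (g x1 x2 x7))))) - (R.ρ x3 (R.ρ x4 (R.ρ x6 (R.ρ x5 (g x1 x2 x7))))) - (R.ρ x3 (R.ρ x4 (R.θ x5 x6 (g x1 x2 x7)))) + (R.ρ x3 (R.ρ x4 (R.θ x6 x5 (g x1 x2 x7)))) := by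
      have hx := congrArg (R.ρ x3) (hb26)
      simp only [map_add, map_sub, map_neg] at hx
      linear_combination (norm := abel1) hx
    have hb28 : (R.ρ x4 (R.D x1 x2 (R.ρ x3 (g x5 x6 x7)))) = -(R.ρ x4 (R.ρ (L.mul x1 x2) (R.ρ x3 (g x5 x6 x7)))) + (R.ρ x4 (R.ρ x1 (R.ρ x2 (R.ρ x3 (g x5 x6 x7))))) - (R.ρ x4 (R.ρ x2 (R.ρ x1 (R.ρ x3 (g x5 x6 x7))))) - (R.ρ x4 (R.θ x1 x2 (R.ρ x3 (g x5 x6 x7)))) + (R.ρ x4 (R.θ x2 x1 (R.ρ x3 (g x5 x6 x7)))) := by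
      have hx := congrArg (R.ρ x4) (hr1 x1 x2 (R.ρ x3 (g x5 x6 x7)))
      simp only [map_add, map_sub, map_neg] at hx
      linear_combination (norm := abel1) hx
    have hb29 : (R.ρ x4 (R.ρ (L.tri x1 x2 x3) (g x5 x6 x7))) = (R.ρ x4 (R.D x1 x2 (R.ρ x3 (g x5 x6 x7)))) - (R.ρ x4 (R.ρ x3 (R.D x1 x2 (g x5 x6 x7)))) := by
      have hx := congrArg (R.ρ x4) (hr5 x1 x2 x3 (g x5 x6 x7))
      simp only [map_add, map_sub, map_neg] at hx
      linear_combination (norm := abel1) hx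
    have hb30 : (R.ρ x4 (R.D x1 x2 (R.ρ x3 (g x5 x6 x7)))) = -(R.ρ x4 (R.ρ (L.mul x1 x2) (R.ρ x3 (g x5 x6 x7)))) + (R.ρ x4 (R.ρ x1 (R.ρ x2 (R.ρ x3 (g x5 x6 x7))))) - (R.ρ x4 (R.ρ x2 (R.ρ x1 (R.ρ x3 (g x5 x6 x7))))) - (R.ρ x4 (R.θ x1 x2 (R.ρ x3 (g x5 x6 x7)))) + (R.ρ x4 (R.θ x2 x1 (R.ρ x3 (g x5 x6 x7)))) := by
      have hx := congrArg (R.ρ x4) (hr1 x1 x2 (R.ρ x3 (g x5 x6 x7)))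
      simp only [map_add, map_sub, map_neg] at hx
      linear_combination (norm := abel1) hx
    have hb31 : (R.ρ x3 (R.D x5 x6 (g x1 x2 x7))) = -(R.ρ x3 (R.ρ (L.mul x5 x6) (g x1 x2 x7))) + (R.ρ x3 (R.ρ x5 (R.ρ x6 (g x1 x2 x7)))) - (R.ρ x3 (R.ρ x6 (R.ρ x5 (g x1 x2 x7)))) - (R.ρ x3 (R.θ x5 x6 (g x1 x2 x7))) + (R.ρ x3 (R.θ x6 x5 (g x1 x2 x7))) := by
      have hx := congrArg (R.ρ x3) (hr1 x5 x6 (g x1 x2 x7))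
      simp only [map_add, map_sub, map_neg] at hx
      linear_combination (norm := abel1) hx
    have hb32 : (R.ρ x4 (R.ρ x3 (R.D x5 x6 (g x1 x2 x7)))) = -(R.ρ x4 (R.ρ x3 (R.ρ (L.mul x5 x6) (g x1 x2 x7)))) + (R.ρ x4 (R.ρ x3 (R.ρ x5 (R.ρ x6 (g x1 x2 x7))))) - (R.ρ x4 (R.ρ x3 (R.ρ x6 (R.ρ x5 (g x1 x2 x7))))) - (R.ρ x4 (R.ρ x3 (R.θ x5 x6 (g x1 x2 x7)))) + (R.ρ x4 (R.ρ x3 (R.θ x6 x5 (g x1 x2 x7)))) := by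
      have hx := congrArg (R.ρ x4) (hb31)
      simp only [map_add, map_sub, map_neg] at hx
      linear_combination (norm := abel1) hx
    have hb33 : (R.ρ x5 (R.D x1 x2 (R.ρ x6 (g x3 x4 x7)))) = -(R.ρ x5 (R.ρ (L.mul x1 x2) (R.ρ x6 (g x3 x4 x7)))) + (R.ρ x5 (R.ρ x1 (R.ρ x2 (R.ρ x6 (g x3 x4 x7))))) - (R.ρ x5 (R.ρ x2 (R.ρ x1 (R.ρ x6 (g x3 x4 x7))))) - (R.ρ x5 (R.θ x1 x2 (R.ρ x6 (g x3 x4 x7)))) + (R.ρ x5 (R.θ x2 x1 (R.ρ x6 (g x3 x4 x7)))) := by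
      have hx := congrArg (R.ρ x5) (hr1 x1 x2 (R.ρ x6 (g x3 x4 x7)))
      simp only [map_add, map_sub, map_neg] at hx
      linear_combination (norm := abel1) hx
    have hb34 : (R.ρ x5 (R.D x3 x4 (R.ρ x6 (g x1 x2 x7)))) = -(R.ρ x5 (R.ρ (L.mul x3 x4) (R.ρ x6 (g x1 x2 x7)))) + (R.ρ x5 (R.ρ x3 (R.ρ x4 (R.ρ x6 (g x1 x2 x7))))) - (R.ρ x5 (R.ρ x4 (R.ρ x3 (R.ρ x6 (g x1 x2 x7))))) - (R.ρ x5 (R.θ x3 x4 (R.ρ x6 (g x1 x2 x7)))) + (R.ρ x5 (R.θ x4 x3 (R.ρ x6 (g x1 x2 x7)))) := by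
      have hx := congrArg (R.ρ x5) (hr1 x3 x4 (R.ρ x6 (g x1 x2 x7)))
      simp only [map_add, map_sub, map_neg] at hx
      linear_combination (norm := abel1) hx
    have hb35 : (R.ρ x5 (R.ρ (L.tri x1 x2 x6) (g x3 x4 x7))) = (R.ρ x5 (R.D x1 x2 (R.ρ x6 (g x3 x4 x7)))) - (R.ρ x5 (R.ρ x6 (R.D x1 x2 (g x3 x4 x7)))) := by
      have hx := congrArg (R.ρ x5) (hr5 x1 x2 x6 (g x3 x4 x7))
      simp only [map_add, map_sub, map_neg] at hx
      linear_combination (norm := abel1) hx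
    have hb36 : (R.ρ x5 (R.D x1 x2 (R.ρ x6 (g x3 x4 x7)))) = -(R.ρ x5 (R.ρ (L.mul x1 x2) (R.ρ x6 (g x3 x4 x7)))) + (R.ρ x5 (R.ρ x1 (R.ρ x2 (R.ρ x6 (g x3 x4 x7))))) - (R.ρ x5 (R.ρ x2 (R.ρ x1 (R.ρ x6 (g x3 x4 x7))))) - (R.ρ x5 (R.θ x1 x2 (R.ρ x6 (g x3 x4 x7)))) + (R.ρ x5 (R.θ x2 x1 (R.ρ x6 (g x3 x4 x7)))) := by
      have hx := congrArg (R.ρ x5) (hr1 x1 x2 (R.ρ x6 (g x3 x4 x7)))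
      simp only [map_add, map_sub, map_neg] at hx
      linear_combination (norm := abel1) hx
    have hb37 : (R.ρ x5 (R.ρ (L.tri x3 x4 x6) (g x1 x2 x7))) = (R.ρ x5 (R.D x3 x4 (R.ρ x6 (g x1 x2 x7)))) - (R.ρ x5 (R.ρ x6 (R.D x3 x4 (g x1 x2 x7)))) := by
      have hx := congrArg (R.ρ x5) (hr5 x3 x4 x6 (g x1 x2 x7))
      simp only [map_add, map_sub, map_neg] at hx
      linear_combination (norm := abel1) hx
    have hb38 : (R.ρ x5 (R.D x3 x4 (R.ρ x6 (g x1 x2 x7)))) = -(R.ρ x5 (R.ρ (L.mul x3 x4) (R.ρ x6 (g x1 x2 x7)))) + (R.ρ x5 (R.ρ x3 (R.ρ x4 (R.ρ x6 (g x1 x2 x7))))) - (R.ρ x5 (R.ρ x4 (R.ρ x3 (R.ρ x6 (g x1 x2 x7))))) - (R.ρ x5 (R.θ x3 x4 (R.ρ x6 (g x1 x2 x7)))) + (R.ρ x5 (R.θ x4 x3 (R.ρ x6 (g x1 x2 x7)))) := by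
      have hx := congrArg (R.ρ x5) (hr1 x3 x4 (R.ρ x6 (g x1 x2 x7)))
      simp only [map_add, map_sub, map_neg] at hx
      linear_combination (norm := abel1) hx
    have hb39 : (R.ρ x6 (R.D x1 x2 (R.ρ x5 (g x3 x4 x7)))) = -(R.ρ x6 (R.ρ (L.mul x1 x2) (R.ρ x5 (g x3 x4 x7)))) + (R.ρ x6 (R.ρ x1 (R.ρ x2 (R.ρ x5 (g x3 x4 x7))))) - (R.ρ x6 (R.ρ x2 (R.ρ x1 (R.ρ x5 (g x3 x4 x7))))) - (R.ρ x6 (R.θ x1 x2 (R.ρ x5 (g x3 x4 x7)))) + (R.ρ x6 (R.θ x2 x1 (R.ρ x5 (g x3 x4 x7)))) := by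
      have hx := congrArg (R.ρ x6) (hr1 x1 x2 (R.ρ x5 (g x3 x4 x7)))
      simp only [map_add, map_sub, map_neg] at hx
      linear_combination (norm := abel1) hx
    have hb40 : (R.ρ x6 (R.D x3 x4 (R.ρ x5 (g x1 x2 x7)))) = -(R.ρ x6 (R.ρ (L.mul x3 x4) (R.ρ x5 (g x1 x2 x7)))) + (R.ρ x6 (R.ρ x3 (R.ρ x4 (R.ρ x5 (g x1 x2 x7))))) - (R.ρ x6 (R.ρ x4 (R.ρ x3 (R.ρ x5 (g x1 x2 x7))))) - (R.ρ x6 (R.θ x3 x4 (R.ρ x5 (g x1 x2 x7)))) + (R.ρ x6 (R.θ x4 x3 (R.ρ x5 (g x1 x2 x7)))) := by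
      have hx := congrArg (R.ρ x6) (hr1 x3 x4 (R.ρ x5 (g x1 x2 x7)))
      simp only [map_add, map_sub, map_neg] at hx
      linear_combination (norm := abel1) hx
    have hb41 : (R.ρ x6 (R.ρ (L.tri x1 x2 x5) (g x3 x4 x7))) = (R.ρ x6 (R.D x1 x2 (R.ρ x5 (g x3 x4 x7)))) - (R.ρ x6 (R.ρ x5 (R.D x1 x2 (g x3 x4 x7)))) := by
      have hx := congrArg (R.ρ x6) (hr5 x1 x2 x5 (g x3 x4 x7))
      simp only [map_add, map_sub, map_neg] at hx
      linear_combination (norm := abel1) hx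
    have hb42 : (R.ρ x6 (R.D x1 x2 (R.ρ x5 (g x3 x4 x7)))) = -(R.ρ x6 (R.ρ (L.mul x1 x2) (R.ρ x5 (g x3 x4 x7)))) + (R.ρ x6 (R.ρ x1 (R.ρ x2 (R.ρ x5 (g x3 x4 x7))))) - (R.ρ x6 (R.ρ x2 (R.ρ x1 (R.ρ x5 (g x3 x4 x7))))) - (R.ρ x6 (R.θ x1 x2 (R.ρ x5 (g x3 x4 x7)))) + (R.ρ x6 (R.θ x2 x1 (R.ρ x5 (g x3 x4 x7)))) := by
      have hx := congrArg (R.ρ x6) (hr1 x1 x2 (R.ρ x5 (g x3 x4 x7)))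
      simp only [map_add, map_sub, map_neg] at hx
      linear_combination (norm := abel1) hx
    have hb43 : (R.ρ x6 (R.ρ (L.tri x3 x4 x5) (g x1 x2 x7))) = (R.ρ x6 (R.D x3 x4 (R.ρ x5 (g x1 x2 x7)))) - (R.ρ x6 (R.ρ x5 (R.D x3 x4 (g x1 x2 x7)))) := by
      have hx := congrArg (R.ρ x6) (hr5 x3 x4 x5 (g x1 x2 x7))
      simp only [map_add, map_sub, map_neg] at hx
      linear_combination (norm := abel1) hx
    have hb44 : (R.ρ x6 (R.D x3 x4 (R.ρ x5 (g x1 x2 x7)))) = -(R.ρ x6 (R.ρ (L.mul x3 x4) (R.ρ x5 (g x1 x2 x7)))) + (R.ρ x6 (R.ρ x3 (R.ρ x4 (R.ρ x5 (g x1 x2 x7))))) - (R.ρ x6 (R.ρ x4 (R.ρ x3 (R.ρ x5 (g x1 x2 x7))))) - (R.ρ x6 (R.θ x3 x4 (R.ρ x5 (g x1 x2 x7)))) + (R.ρ x6 (R.θ x4 x3 (R.ρ x5 (g x1 x2 x7)))) := by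
      have hx := congrArg (R.ρ x6) (hr1 x3 x4 (R.ρ x5 (g x1 x2 x7)))
      simp only [map_add, map_sub, map_neg] at hx
      linear_combination (norm := abel1) hx
    have hb45 : (R.θ x1 x2 (R.D x3 x4 (g x5 x6 x7))) = -(R.θ x1 x2 (R.ρ (L.mul x3 x4) (g x5 x6 x7))) + (R.θ x1 x2 (R.ρ x3 (R.ρ x4 (g x5 x6 x7)))) - (R.θ x1 x2 (R.ρ x4 (R.ρ x3 (g x5 x6 x7)))) - (R.θ x1 x2 (R.θ x3 x4 (g x5 x6 x7))) + (R.θ x1 x2 (R.θ x4 x3 (g x5 x6 x7))) := by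
      have hx := congrArg (R.θ x1 x2) (hr1 x3 x4 (g x5 x6 x7))
      simp only [map_add, map_sub, map_neg] at hx
      linear_combination (norm := abel1) hx
    have hb46 : (R.θ x1 x2 (R.D x5 x6 (g x3 x4 x7))) = -(R.θ x1 x2 (R.ρ (L.mul x5 x6) (g x3 x4 x7))) + (R.θ x1 x2 (R.ρ x5 (R.ρ x6 (g x3 x4 x7)))) - (R.θ x1 x2 (R.ρ x6 (R.ρ x5 (g x3 x4 x7)))) - (R.θ x1 x2 (R.θ x5 x6 (g x3 x4 x7))) + (R.θ x1 x2 (R.θ x6 x5 (g x3 x4 x7))) := by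
      have hx := congrArg (R.θ x1 x2) (hr1 x5 x6 (g x3 x4 x7))
      simp only [map_add, map_sub, map_neg] at hx
      linear_combination (norm := abel1) hx
    have hb47 : (R.θ x2 x1 (R.D x3 x4 (g x5 x6 x7))) = -(R.θ x2 x1 (R.ρ (L.mul x3 x4) (g x5 x6 x7))) + (R.θ x2 x1 (R.ρ x3 (R.ρ x4 (g x5 x6 x7)))) - (R.θ x2 x1 (R.ρ x4 (R.ρ x3 (g x5 x6 x7)))) - (R.θ x2 x1 (R.θ x3 x4 (g x5 x6 x7))) + (R.θ x2 x1 (R.θ x4 x3 (g x5 x6 x7))) := by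
      have hx := congrArg (R.θ x2 x1) (hr1 x3 x4 (g x5 x6 x7))
      simp only [map_add, map_sub, map_neg] at hx
      linear_combination (norm := abel1) hx
    have hb48 : (R.θ x2 x1 (R.D x5 x6 (g x3 x4 x7))) = -(R.θ x2 x1 (R.ρ (L.mul x5 x6) (g x3 x4 x7))) + (R.θ x2 x1 (R.ρ x5 (R.ρ x6 (g x3 x4 x7)))) - (R.θ x2 x1 (R.ρ x6 (R.ρ x5 (g x3 x4 x7)))) - (R.θ x2 x1 (R.θ x5 x6 (g x3 x4 x7))) + (R.θ x2 x1 (R.θ x6 x5 (g x3 x4 x7))) := by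
      have hx := congrArg (R.θ x2 x1) (hr1 x5 x6 (g x3 x4 x7))
      simp only [map_add, map_sub, map_neg] at hx
      linear_combination (norm := abel1) hx
    have hb49 : (R.θ x3 x4 (R.D x5 x6 (g x1 x2 x7))) = -(R.θ x3 x4 (R.ρ (L.mul x5 x6) (g x1 x2 x7))) + (R.θ x3 x4 (R.ρ x5 (R.ρ x6 (g x1 x2 x7)))) - (R.θ x3 x4 (R.ρ x6 (R.ρ x5 (g x1 x2 x7)))) - (R.θ x3 x4 (R.θ x5 x6 (g x1 x2 x7))) + (R.θ x3 x4 (R.θ x6 x5 (g x1 x2 x7))) := by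
      have hx := congrArg (R.θ x3 x4) (hr1 x5 x6 (g x1 x2 x7))
      simp only [map_add, map_sub, map_neg] at hx
      linear_combination (norm := abel1) hx
    have hb50 : (R.θ x4 x3 (R.D x5 x6 (g x1 x2 x7))) = -(R.θ x4 x3 (R.ρ (L.mul x5 x6) (g x1 x2 x7))) + (R.θ x4 x3 (R.ρ x5 (R.ρ x6 (g x1 x2 x7)))) - (R.θ x4 x3 (R.ρ x6 (R.ρ x5 (g x1 x2 x7)))) - (R.θ x4 x3 (R.θ x5 x6 (g x1 x2 x7))) + (R.θ x4 x3 (R.θ x6 x5 (g x1 x2 x7))) := by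
      have hx := congrArg (R.θ x4 x3) (hr1 x5 x6 (g x1 x2 x7))
      simp only [map_add, map_sub, map_neg] at hx
      linear_combination (norm := abel1) hx
    simp only [Rd45II, RdI, RdII]
    simp only [map_add, map_sub, map_neg]
    linear_combination (norm := abel1) -hr1 (L.tri x1 x2 x3) x4 (g x5 x6 x7) + hr1 (L.tri x1 x2 x5) x6 (g x3 x4 x7) - hr1 (L.tri x3 x4 x5) x6 (g x1 x2 x7) + hr1 x1 x2 (R.D x3 x4 (g x5 x6 x7)) - hr1 x1 x2 (R.D x5 x6 (g x3 x4 x7)) + hr1 x1 x2 (R.θ x5 x7 (g x3 x4 x6)) - hr1 x1 x2 (R.θ x6 x7 (g x3 x4 x5)) - hr1 x3 (L.tri x1 x2 x4) (g x5 x6 x7) - hr1 x3 x4 (R.D x1 x2 (g x5 x6 x7)) + hr1 x3 x4 (R.D x5 x6 (g x1 x2 x7)) - hr1 x3 x4 (R.θ x5 x7 (g x1 x2 x6)) + hr1 x3 x4 (R.θ x6 x7 (g x1 x2 x5)) + hr1 x5 (L.tri x1 x2 x6) (g x3 x4 x7) - hr1 x5 (L.tri x3 x4 x6) (g x1 x2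 x7) + hr1 x5 x6 (R.D x1 x2 (g x3 x4 x7)) - hr1 x5 x6 (R.D x3 x4 (g x1 x2 x7)) + hr1 x5 x6 (R.θ x3 x7 (g x1 x2 x4)) - hr1 x5 x6 (R.θ x4 x7 (g x1 x2 x3)) + hb1 + hb2 - hb3 + hb4 + hb5 + hily5rho x1 x2 x3 x4 (g x5 x6 x7) - hily5rho x1 x2 x5 x6 (g x3 x4 x7) + hily5rho x3 x4 x5 x6 (g x1 x2 x7) - hb6 + hb7 + hb8 - hb9 - hb10 + hb11 + hr5 x1 x2 (L.mul x3 x4) (g x5 x6 x7) + hr1 x1 x2 (R.ρ (L.mul x3 x4) (g x5 x6 x7)) - hb12 - hr5 x1 x2 (L.mul x5 x6) (g x3 x4 x7) - hr1 x1 x2 (R.ρ (L.mul x5 x6) (g x3 x4 x7)) + hb13 - hr5 x1 x2 x3 (R.ρ x4 (g x5 x6 x7)) - hr1 x1 x2 (R.ρ x3 (R.ρ x4 (g x5 x6 x7))) + hr5 x1 x2 x4 (R.ρ x3 (g x5 x6 x7)) + hr1 x1 x2 (R.ρ x4 (R.ρ x3 (g x5 x6 x7))) + hr5 x1 x2 x5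 (R.ρ x6 (g x3 x4 x7)) + hr1 x1 x2 (R.ρ x5 (R.ρ x6 (g x3 x4 x7))) - hr5 x1 x2 x6 (R.ρ x5 (g x3 x4 x7)) - hr1 x1 x2 (R.ρ x6 (R.ρ x5 (g x3 x4 x7))) + hr5 x3 x4 (L.mul x5 x6) (g x1 x2 x7) + hr1 x3 x4 (R.ρ (L.mul x5 x6) (g x1 x2 x7)) - hb14 - hr5 x3 x4 x5 (R.ρ x6 (g x1 x2 x7)) - hr1 x3 x4 (R.ρ x5 (R.ρ x6 (g x1 x2 x7))) + hr5 x3 x4 x6 (R.ρ x5 (g x1 x2 x7)) + hr1 x3 x4 (R.ρ x6 (R.ρ x5 (g x1 x2 x7))) + hb16 - hb18 - hb20 + hb22 + hb23 - hb24 - hb25 + hb27 - hb28 + hb29 + hb30 - hb32 - hb33 + hb34 + hb35 + hb36 - hb37 - hb38 + hb39 - hb40 - hb41 - hb42 + hb43 + hb44 + hr6 x1 x2 x3 x4 (g x5 x6 x7) + hr1 x1 x2 (R.θ x3 x4 (g x5 x6 x7)) - hr6 x1 x2 x4 x3 (g x5 x6 x7) - hr1 x1 x2 (R.θ x4 x3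 (g x5 x6 x7)) - hr6 x1 x2 x5 x6 (g x3 x4 x7) - hr1 x1 x2 (R.θ x5 x6 (g x3 x4 x7)) - hr6 x1 x2 x5 x7 (g x3 x4 x6) - hr1 x1 x2 (R.θ x5 x7 (g x3 x4 x6)) + hr6 x1 x2 x6 x5 (g x3 x4 x7) + hr1 x1 x2 (R.θ x6 x5 (g x3 x4 x7)) + hr6 x1 x2 x6 x7 (g x3 x4 x5) + hr1 x1 x2 (R.θ x6 x7 (g x3 x4 x5)) + hr6 x3 x4 x5 x6 (g x1 x2 x7) + hr1 x3 x4 (R.θ x5 x6 (g x1 x2 x7)) + hr6 x3 x4 x5 x7 (g x1 x2 x6) + hr1 x3 x4 (R.θ x5 x7 (g x1 x2 x6)) - hr6 x3 x4 x6 x5 (g x1 x2 x7) - hr1 x3 x4 (R.θ x6 x5 (g x1 x2 x7)) - hr6 x3 x4 x6 x7 (g x1 x2 x5) - hr1 x3 x4 (R.θ x6 x7 (g x1 x2 x5)) - hb45 + hb46 + hb47 - hb48 - hr4 x3 x5 x6 x7 (g x1 x2 x4) - hr1 x5 x6 (R.θ x3 x7 (g x1 x2 x4)) - hb49 + hr4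 x4 x5 x6 x7 (g x1 x2 x3) + hr1 x5 x6 (R.θ x4 x7 (g x1 x2 x3)) + hb50
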